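/- (Lemma 1, abstract form.) Let T ≥ 2, and for each k ∈ {1,…,T} let L0_k, L1_k : ℝ → ℝ be affine functions, let Y_k be a finite type, and let q0_k, q1_k : Y_k → ℝ be probability mass functions. Let c ∈ ℝ. Define value functions backwards by V_T(π) = min(L0_T(π), L1_T(π)) and, for k = T−1, …, 1, G_k(π) = c + Σ_{y ∈ Y_{k+1}} g_{q0_{k+1}(y), q1_{k+1}(y), V_{k+1}}(π) and V_k(π) = min(L0_k(π), L1_k(π), G_k(π)). Then: (i) V_T is the minimum of two affine functions and is concave on [0,1]; (ii) for every k < T, G_k is concave on [0,1]; and (iii) for every k, V_k is concave on [0,1] and is the minimum of two affine functions and a concave function. -/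

import Mathlib

/-- A function `f : ℝ → ℝ` is concave on `[0,1]`: for all `x, y ∈ [0,1]` and `t ∈ [0,1]`,
`f (t·x + (1−t)·y) ≥ t·f x + (1−t)·f y`. -/
def ConcaveOnUnit (f : ℝ → ℝ) : Prop :=
  ∀ x ∈ Set.Icc (0:ℝ) 1, ∀ y ∈ Set.Icc (0:ℝ) 1, ∀ t ∈ Set.Icc (0:ℝ) 1,
    t * f x + (1 - t) * f y ≤ f (t * x + (1 - t) * y)

/-- A function `L : ℝ → ℝ` is affine: `L x = a·x + b` for some constants `a, b`. -/
def IsAffine (L : ℝ → ℝ) : Prop := ∃ a b : ℝ, ∀ x, L x = a * x + b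

/-- `g_{a,b,V}(π) = (π·a + (1−π)·b) · V (π·a / (π·a + (1−π)·b))` when
`π·a + (1−π)·b > 0`, and `0` otherwise. -/
noncomputable def gFun (a b : ℝ) (V : ℝ → ℝ) (π : ℝ) : ℝ :=
  if 0 < π * a + (1 - π) * b then
    (π * a + (1 - π) * b) * V (π * a / (π * a + (1 - π) * b))
  else 0

lemma concave_congr {f g : ℝ → ℝ} (h : ∀ x, f x = g x) (hg : ConcaveOnUnit g) :
    ConcaveOnUnit f := by
  intro x hx y hy t ht
  simp only [h]
  exact hg x hx y hy t ht

lemma affine_concave {L : ℝ → ℝ} (h : IsAffine L) : ConcaveOnUnit L := by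
  obtain ⟨a, b, hab⟩ := h
  intro x hx y hy t ht
  simp only [hab]
  nlinarith [ht.1, ht.2]

lemma min_concave {f g : ℝ → ℝ} (hf : ConcaveOnUnit f) (hg : ConcaveOnUnit g) :
    ConcaveOnUnit (fun x => min (f x) (g x)) := by
  intro x hx y hy t ht
  simp only
  apply le_min
  · calc t * min (f x) (g x) + (1 - t) * min (f y) (g y)
        ≤ t * f x + (1 - t) * f y := by
          have h1 := min_le_left (f x) (g x)
          have h2 := min_le_left (f y) (g y)
          have := ht.1; have := ht.2
          nlinarith
    _ ≤ f (t * x + (1 - t) * y) := hf x hx y hy t ht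
  · calc t * min (f x) (g x) + (1 - t) * min (f y) (g y)
        ≤ t * g x + (1 - t) * g y := by
          have h1 := min_le_right (f x) (g x)
          have h2 := min_le_right (f y) (g y)
          have := ht.1; have := ht.2
          nlinarith
    _ ≤ g (t * x + (1 - t) * y) := hg x hx y hy t ht

lemma sum_concave {ι : Type*} (s : Finset ι) (f : ι → ℝ → ℝ)
    (h : ∀ i ∈ s, ConcaveOnUnit (f i)) :
    ConcaveOnUnit (fun x => ∑ i ∈ s, f i x) := by
  intro x hx y hy t ht
  simp only
  rw [Finset.mul_sum, Finset.mul_sum, ← Finset.sum_add_distrib]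
  exact Finset.sum_le_sum fun i hi => h i hi x hx y hy t ht

lemma const_add_concave (c : ℝ) {f : ℝ → ℝ} (hf : ConcaveOnUnit f) :
    ConcaveOnUnit (fun x => c + f x) := by
  intro x hx y hy t ht
  simp only
  have h1 := hf x hx y hy t ht
  nlinarith

lemma gFun_concave {a b : ℝ} (ha : 0 ≤ a) (hb : 0 ≤ b) {V : ℝ → ℝ}
    (hV : ConcaveOnUnit V) : ConcaveOnUnit (gFun a b V) := by
  intro x hx y hy t ht
  obtain ⟨hx0, hx1⟩ := hx
  obtain ⟨hy0, hy1⟩ := hy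
  obtain ⟨ht0, ht1⟩ := ht
  set sx := x * a + (1 - x) * b with hsx
  set sy := y * a + (1 - y) * b with hsy
  set z := t * x + (1 - t) * y with hzdef
  have hz0 : 0 ≤ z := by nlinarith
  have hz1 : z ≤ 1 := by nlinarith
  have hsxnn : 0 ≤ sx := add_nonneg (mul_nonneg hx0 ha) (mul_nonneg (by linarith) hb)
  have hsynn : 0 ≤ sy := add_nonneg (mul_nonneg hy0 ha) (mul_nonneg (by linarith) hb)
  have hszeq : z * a + (1 - z) * b = t * sx + (1 - t) * sy := by
    simp only [hzdef, hsx, hsy]; ring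
  set sz := z * a + (1 - z) * b with hsz
  have hsznn : 0 ≤ sz := by rw [hszeq]; nlinarith
  -- x*a ≤ sx etc.
  have hxale : x * a ≤ sx := by nlinarith
  have hyale : y * a ≤ sy := by nlinarith
  have hxann : 0 ≤ x * a := mul_nonneg hx0 ha
  have hyann : 0 ≤ y * a := mul_nonneg hy0 ha
  -- unified form of gFun
  have gx_eq : gFun a b V x = sx * V (x * a / sx) := by
    unfold gFun
    rcases eq_or_lt_of_le hsxnn with h | h
    · rw [if_neg (by rw [← hsx, ← h]; exact lt_irrefl 0), ← h]; ring
    · rw [if_pos (by rw [← hsx]; exact h)]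
  have gy_eq : gFun a b V y = sy * V (y * a / sy) := by
    unfold gFun
    rcases eq_or_lt_of_le hsynn with h | h
    · rw [if_neg (by rw [← hsy, ← h]; exact lt_irrefl 0), ← h]; ring
    · rw [if_pos (by rw [← hsy]; exact h)]
  have gz_eq : gFun a b V z = sz * V (z * a / sz) := by
    unfold gFun
    rcases eq_or_lt_of_le hsznn with h | h
    · rw [if_neg (by rw [← hsz, ← h]; exact lt_irrefl 0), ← h]; ring
    · rw [if_pos (by rw [← hsz]; exact h)]
  rw [gx_eq, gy_eq, gz_eq]
  rcases eq_or_lt_of_le hsznn with hzero | hpos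
  · -- sz = 0 : both sides are 0
    have hs : t * sx + (1 - t) * sy = 0 := by rw [← hszeq, ← hzero]
    have hts : 0 ≤ t * sx := mul_nonneg ht0 hsxnn
    have hts' : 0 ≤ (1 - t) * sy := mul_nonneg (by linarith) hsynn
    have h1 : t * sx = 0 ∧ (1 - t) * sy = 0 := by
      constructor <;> linarith
    have hsx0 : t * (sx * V (x * a / sx)) = 0 := by
      rcases mul_eq_zero.mp h1.1 with h | h
      · rw [h]; ring
      · rw [h]; ring
    have hsy0 : (1 - t) * (sy * V (y * a / sy)) = 0 := by
      rcases mul_eq_zero.mp h1.2 with h | h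
      · rw [h]; ring
      · rw [h]; ring
    rw [hsx0, hsy0, ← hzero]
    norm_num
  · -- sz > 0 : perspective argument
    set px := x * a / sx with hpx
    set py := y * a / sy with hpy
    have hpx0 : 0 ≤ px := div_nonneg hxann hsxnn
    have hpx1 : px ≤ 1 := div_le_one_of_le₀ hxale hsxnn
    have hpy0 : 0 ≤ py := div_nonneg hyann hsynn
    have hpy1 : py ≤ 1 := div_le_one_of_le₀ hyale hsynn
    set lam := t * sx / sz with hlam
    have hlam0 : 0 ≤ lam := div_nonneg (mul_nonneg ht0 hsxnn) hsznn
    have hlam1 : lam ≤ 1 := by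
      apply div_le_one_of_le₀ _ hsznn
      nlinarith [hszeq]
    have hone : 1 - lam = (1 - t) * sy / sz := by
      rw [hlam]
      field_simp
      linarith [hszeq]
    -- key: sx * px = x * a (even if sx = 0, since then x*a = 0)
    have hxkey : sx * px = x * a := by
      rcases eq_or_lt_of_le hsxnn with h | h
      · have : x * a = 0 := le_antisymm (by rw [h]; exact hxale) hxann
        rw [← h, this]; simp [hpx]
      · rw [hpx]; field_simp
    have hykey : sy * py = y * a := by
      rcases eq_or_lt_of_le hsynn with h | h
      · have : y * a = 0 := le_antisymm (by rw [h]; exact hyale) hyann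
        rw [← h, this]; simp [hpy]
      · rw [hpy]; field_simp
    have hcomb : lam * px + (1 - lam) * py = z * a / sz := by
      rw [hone, hlam]
      have e1 : t * sx / sz * px = t * (sx * px) / sz := by ring
      have e2 : (1 - t) * sy / sz * py = (1 - t) * (sy * py) / sz := by ring
      rw [e1, e2, hxkey, hykey]
      rw [← add_div]
      congr 1
      simp only [hzdef]; ring
    have hVineq := hV px ⟨hpx0, hpx1⟩ py ⟨hpy0, hpy1⟩ lam ⟨hlam0, hlam1⟩
    rw [hcomb] at hVineq
    have := mul_le_mul_of_nonneg_left hVineq (le_of_lt hpos)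
    calc t * (sx * V px) + (1 - t) * (sy * V py)
        = sz * (lam * V px + (1 - lam) * V py) := by
          rw [hone, hlam]
          field_simp
      _ ≤ sz * V (z * a / sz) := this

/-- Lemma 1 (abstract form): the value functions `V_k` defined by the backwards recursion
`V_T = min(L0_T, L1_T)`, `G_k(π) = c + Σ_y g_{q0_{k+1} y, q1_{k+1} y, V_{k+1}}(π)`,
`V_k = min(L0_k, L1_k, G_k)` satisfy: (i) `V_T` is a minimum of two affine functions and
is concave on `[0,1]`; (ii) each `G_k` (`1 ≤ k < T`) is concave on `[0,1]`;
(iii) each `V_k` (`1 ≤ k ≤ T`) is concave on `[0,1]` and is the minimum of two affine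
functions and a concave function. -/
theorem value_function_concave_structure
    (T : ℕ) (hT : 2 ≤ T)
    (L0 L1 : ℕ → ℝ → ℝ)
    (hL0 : ∀ k, 1 ≤ k → k ≤ T → IsAffine (L0 k))
    (hL1 : ∀ k, 1 ≤ k → k ≤ T → IsAffine (L1 k))
    (Y : ℕ → Type) [∀ k, Fintype (Y k)]
    (q0 q1 : (k : ℕ) → Y k → ℝ)
    (hq0 : ∀ k, (∀ y, 0 ≤ q0 k y) ∧ ∑ y : Y k, q0 k y = 1)
    (hq1 : ∀ k, (∀ y, 0 ≤ q1 k y) ∧ ∑ y : Y k, q1 k y = 1)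
    (c : ℝ)
    (V G : ℕ → ℝ → ℝ)
    (hVT : ∀ π, V T π = min (L0 T π) (L1 T π))
    (hG : ∀ k, 1 ≤ k → k < T → ∀ π,
      G k π = c + ∑ y : Y (k + 1), gFun (q0 (k + 1) y) (q1 (k + 1) y) (V (k + 1)) π)
    (hV : ∀ k, 1 ≤ k → k < T → ∀ π,
      V k π = min (L0 k π) (min (L1 k π) (G k π))) :
    -- (i) V_T is the minimum of two affine functions and is concave on [0,1]
    ((∃ A B : ℝ → ℝ, IsAffine A ∧ IsAffine B ∧ ∀ π, V T π = min (A π) (B π)) ∧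
      ConcaveOnUnit (V T)) ∧
    -- (ii) each G_k, 1 ≤ k < T, is concave on [0,1]
    (∀ k, 1 ≤ k → k < T → ConcaveOnUnit (G k)) ∧
    -- (iii) each V_k, 1 ≤ k ≤ T, is concave on [0,1] and is the minimum of two affine
    -- functions and a concave function
    (∀ k, 1 ≤ k → k ≤ T →
      ConcaveOnUnit (V k) ∧
      ∃ A B C : ℝ → ℝ, IsAffine A ∧ IsAffine B ∧ ConcaveOnUnit C ∧
        ∀ π, V k π = min (A π) (min (B π) (C π))) := by
  have main : ∀ d k, 1 ≤ k → k + d = T →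
      ConcaveOnUnit (V k) ∧
      ∃ A B C : ℝ → ℝ, IsAffine A ∧ IsAffine B ∧ ConcaveOnUnit C ∧
        ∀ π, V k π = min (A π) (min (B π) (C π)) := by
    intro d
    induction d with
    | zero =>
      intro k hk hkT
      have hkeq : k = T := by omega
      subst hkeq
      have hA := hL0 k hk le_rfl
      have hB := hL1 k hk le_rfl
      have hconc : ConcaveOnUnit (V k) := by
        apply concave_congr hVT
        exact min_concave (affine_concave hA) (affine_concave hB)
      exact ⟨hconc, L0 k, L1 k, L1 k, hA, hB, affine_concave hB,
        fun π => by rw [hVT π, min_self]⟩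
    | succ n ih =>
      intro k hk hkT
      have hkT' : k < T := by omega
      have ihk := ih (k + 1) (by omega) (by omega)
      have hGk : ConcaveOnUnit (G k) := by
        apply concave_congr (hG k hk hkT')
        apply const_add_concave
        apply sum_concave
        intro y _
        exact gFun_concave ((hq0 (k + 1)).1 y) ((hq1 (k + 1)).1 y) ihk.1
      have hA := hL0 k hk (le_of_lt hkT')
      have hB := hL1 k hk (le_of_lt hkT')
      have hconc : ConcaveOnUnit (V k) := by
        apply concave_congr (hV k hk hkT')
        exact min_concave (affine_concave hA)
          (min_concave (affine_concave hB) hGk)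
      exact ⟨hconc, L0 k, L1 k, G k, hA, hB, hGk, hV k hk hkT'⟩
  refine ⟨⟨⟨L0 T, L1 T, hL0 T (by omega) le_rfl, hL1 T (by omega) le_rfl, hVT⟩,
    (main 0 T (by omega) (by omega)).1⟩, ?_, ?_⟩
  · intro k h1 h2
    have ihk := main (T - (k + 1)) (k + 1) (by omega) (by omega)
    apply concave_congr (hG k h1 h2)
    apply const_add_concave
    apply sum_concave
    intro y _
    exact gFun_concave ((hq0 (k + 1)).1 y) ((hq1 (k + 1)).1 y) ihk.1
  · intro k h1 h2
    exact main (T - k) k h1 (by omega)
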